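/- arXiv:2003.05699 — 4 statements merged into one kernel-verified Lean document; each statement's English description precedes it below -/
import Mathlib

section
/- Let V = {v_1, ..., v_n} be points on the real line with the induced path metric, let X ⊆ V be a set of terminals containing the root r, and let k ≥ 1. Then there exists a minimum-cost k-hop Steiner tree for (V, X, r, k) whose vertex set is exactly X (i.e., it uses no Steiner points outside the terminal set). -/
open Finset

/-- A rooted tree on a finite vertex set, encoded by a parent map and a depth
function. Depth consistency (`depth v = depth (parent v) + 1` for non-root
vertices, depth 0 only at the root) makes this exactly a rooted tree. -/
structure KTree (V : Type) where
  verts : Finset V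
  root : V
  root_mem : root ∈ verts
  parent : V → V
  depth : V → ℕ
  parent_mem : ∀ v ∈ verts, v ≠ root → parent v ∈ verts
  depth_root : depth root = 0
  root_of_depth_zero : ∀ v ∈ verts, depth v = 0 → v = root
  depth_parent : ∀ v ∈ verts, v ≠ root → depth v = depth (parent v) + 1

/-- The cost of a rooted tree: the sum over non-root vertices of the distance
to the parent (i.e. the sum of edge costs). -/
def KTree.cost {V : Type} [DecidableEq V] (d : V → V → ℝ) (T : KTree V) : ℝ :=
  ∑ v ∈ T.verts.erase T.root, d v (T.parent v)

/-- The tree has depth (hops) at most `k`. -/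
def KTree.IsKHop {V : Type} (T : KTree V) (k : ℕ) : Prop :=
  ∀ v ∈ T.verts, T.depth v ≤ k

lemma median_real (S : Finset ℝ) (hS : S.Nonempty) (v : ℝ) :
    ∃ x ∈ S, ∑ a ∈ S, |a - x| ≤ ∑ a ∈ S, |a - v| := by
  classical
  set L := S.filter (fun a => a ≤ v) with hLdef
  set R := S.filter (fun a => ¬ a ≤ v) with hRdef
  have hsplit : ∀ x : ℝ, ∑ a ∈ S, |a - x| = ∑ a ∈ L, |a - x| + ∑ a ∈ R, |a - x| := by
    intro x; rw [hLdef, hRdef, Finset.sum_filter_add_sum_filter_not]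
  by_cases h : R.card ≤ L.card
  · have hL : L.Nonempty := by
      rcases hS with ⟨a, ha⟩
      by_contra hL
      simp only [Finset.not_nonempty_iff_eq_empty] at hL
      have : R = S := by
        rw [hRdef]
        apply Finset.filter_true_of_mem
        intro b hb hble
        have : b ∈ L := Finset.mem_filter.2 ⟨hb, hble⟩
        simp [hL] at this
      rw [hL, this] at h
      simp only [Finset.card_empty, Nat.le_zero, Finset.card_eq_zero] at h
      rw [h] at ha
      exact absurd ha (Finset.notMem_empty a)
    set x := L.max' hL with hxdef
    have hxS : x ∈ S := (Finset.mem_filter.1 (L.max'_mem hL)).1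
    have hxv : x ≤ v := (Finset.mem_filter.1 (L.max'_mem hL)).2
    refine ⟨x, hxS, ?_⟩
    have hLterm : ∀ a ∈ L, |a - x| = |a - v| - (v - x) := by
      intro a ha
      have hax : a ≤ x := L.le_max' a ha
      have hav : a ≤ v := (Finset.mem_filter.1 ha).2
      rw [abs_of_nonpos (by linarith), abs_of_nonpos (by linarith)]; ring
    have hRterm : ∀ a ∈ R, |a - x| = |a - v| + (v - x) := by
      intro a ha
      have hav : v < a := by
        have := (Finset.mem_filter.1 ha).2; linarith [not_le.1 this]
      rw [abs_of_pos (by linarith), abs_of_pos (by linarith)]; ring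
    rw [hsplit x, hsplit v, Finset.sum_congr rfl hLterm, Finset.sum_congr rfl hRterm,
      Finset.sum_sub_distrib, Finset.sum_add_distrib, Finset.sum_const, Finset.sum_const]
    have : (R.card : ℝ) * (v - x) ≤ (L.card : ℝ) * (v - x) := by
      apply mul_le_mul_of_nonneg_right _ (by linarith)
      exact_mod_cast h
    simp only [nsmul_eq_mul]
    linarith
  · push_neg at h
    have hR : R.Nonempty := Finset.card_pos.1 (by omega)
    set x := R.min' hR with hxdef
    have hxS : x ∈ S := (Finset.mem_filter.1 (R.min'_mem hR)).1
    have hxv : v < x := by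
      have := (Finset.mem_filter.1 (R.min'_mem hR)).2
      exact not_le.1 this
    refine ⟨x, hxS, ?_⟩
    have hRterm : ∀ a ∈ R, |a - x| = |a - v| - (x - v) := by
      intro a ha
      have hax : x ≤ a := R.min'_le a ha
      have hav : v < a := not_le.1 (Finset.mem_filter.1 ha).2
      rw [abs_of_nonneg (by linarith), abs_of_pos (by linarith)]; ring
    have hLterm : ∀ a ∈ L, |a - x| = |a - v| + (x - v) := by
      intro a ha
      have hav : a ≤ v := (Finset.mem_filter.1 ha).2
      rw [abs_of_nonpos (by linarith), abs_of_nonpos (by linarith)]; ring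
    rw [hsplit x, hsplit v, Finset.sum_congr rfl hLterm, Finset.sum_congr rfl hRterm,
      Finset.sum_sub_distrib, Finset.sum_add_distrib, Finset.sum_const, Finset.sum_const]
    have : (L.card : ℝ) * (x - v) ≤ (R.card : ℝ) * (x - v) := by
      apply mul_le_mul_of_nonneg_right _ (by linarith)
      exact_mod_cast h.le
    simp only [nsmul_eq_mul]
    linarith

lemma median_fin {n : ℕ} (f : Fin n → ℝ) (hf : StrictMono f)
    (S : Finset (Fin n)) (hS : S.Nonempty) (v : Fin n) :
    ∃ x ∈ S, ∑ a ∈ S, |f a - f x| ≤ ∑ a ∈ S, |f a - f v| := by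
  have hinj : Function.Injective f := hf.injective
  obtain ⟨y, hy, hle⟩ := median_real (S.image f) (hS.image f) (f v)
  obtain ⟨x, hxS, hxy⟩ := Finset.mem_image.1 hy
  refine ⟨x, hxS, ?_⟩
  have h1 : ∑ a ∈ S.image f, |a - y| = ∑ a ∈ S, |f a - f x| := by
    rw [Finset.sum_image (fun a _ b _ h => hinj h)]
    exact Finset.sum_congr rfl (fun a _ => by rw [hxy])
  have h2 : ∑ a ∈ S.image f, |a - f v| = ∑ a ∈ S, |f a - f v| := by
    rw [Finset.sum_image (fun a _ b _ h => hinj h)]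
  rw [← h1, ← h2]; exact hle

inductive Desc {V : Type} (π : V → V) (r v : V) : V → Prop
  | base : Desc π r v v
  | step (u : V) (hu : u ≠ r) (h : Desc π r v (π u)) : Desc π r v u

namespace KTree
variable {V : Type} (T : KTree V)

lemma depth_le_of_desc {v : V} (hvW : v ∈ T.verts) :
    ∀ u, Desc T.parent T.root v u → u ∈ T.verts → T.depth v ≤ T.depth u := by
  intro u hd
  induction hd with
  | base => intro _; exact le_rfl
  | step u hu h ih =>
      intro huW
      have hpW : T.parent u ∈ T.verts := T.parent_mem u huW hu
      have := ih hpW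
      rw [T.depth_parent u huW hu]
      omega

lemma depth_lt_of_desc {v : V} (hvW : v ∈ T.verts) {u : V}
    (hd : Desc T.parent T.root v u) (huW : u ∈ T.verts) (huv : u ≠ v) :
    T.depth v < T.depth u := by
  cases hd with
  | base => exact absurd rfl huv
  | step u hu h =>
      have hpW : T.parent u ∈ T.verts := T.parent_mem u huW hu
      have := T.depth_le_of_desc hvW _ h hpW
      rw [T.depth_parent u huW hu]
      omega

lemma not_desc_root {v : V} (hvr : v ≠ T.root) : ¬ Desc T.parent T.root v T.root := by
  intro h
  cases h with
  | base => exact hvr rfl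
  | step u hu h => exact hu rfl

lemma desc_parent {v u : V} (hd : Desc T.parent T.root v u) (huv : u ≠ v) :
    Desc T.parent T.root v (T.parent u) := by
  cases hd with
  | base => exact absurd rfl huv
  | step u hu h => exact h

lemma not_desc_parent {v u : V} (huW : u ∈ T.verts) (hur : u ≠ T.root)
    (h : ¬ Desc T.parent T.root v u) : ¬ Desc T.parent T.root v (T.parent u) :=
  fun hp => h (Desc.step u hur hp)

lemma parent_ne_self {v : V} (hvW : v ∈ T.verts) (hvr : v ≠ T.root) : T.parent v ≠ v := by
  intro h
  have := T.depth_parent v hvW hvr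
  rw [h] at this
  omega

lemma depth_pos {v : V} (hvW : v ∈ T.verts) (hvr : v ≠ T.root) : 1 ≤ T.depth v := by
  rw [T.depth_parent v hvW hvr]; omega

lemma parent_parent_ne {v : V} (hvW : v ∈ T.verts) (hvr : v ≠ T.root)
    (hpW : T.parent v ∈ T.verts) (hpr : T.parent v ≠ T.root) : T.parent (T.parent v) ≠ v := by
  intro h
  have h1 := T.depth_parent v hvW hvr
  have h2 := T.depth_parent _ hpW hpr
  rw [h] at h2
  omega

end KTree

lemma removeSteiner {n : ℕ} (f : Fin n → ℝ) (hf : StrictMono f) (k : ℕ)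
    (T : KTree (Fin n)) (hT : T.IsKHop k) (v : Fin n) (hvW : v ∈ T.verts) (hvr : v ≠ T.root) :
    ∃ T' : KTree (Fin n), T'.root = T.root ∧ T'.verts = T.verts.erase v ∧ T'.IsKHop k ∧
      T'.cost (fun i j => |f i - f j|) ≤ T.cost (fun i j => |f i - f j|) := by
  classical
  have hpW : T.parent v ∈ T.verts := T.parent_mem v hvW hvr
  have hpv : T.parent v ≠ v := T.parent_ne_self hvW hvr
  have hδv : T.depth v = T.depth (T.parent v) + 1 := T.depth_parent v hvW hvr
  set C := T.verts.filter (fun c => c ≠ T.root ∧ T.parent c = v) with hC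
  have hCW : ∀ c ∈ C, c ∈ T.verts ∧ c ≠ T.root ∧ T.parent c = v := fun c hc => by
    obtain ⟨h1, h2, h3⟩ := Finset.mem_filter.1 hc; exact ⟨h1, h2, h3⟩
  have hvC : v ∉ C := by
    intro h
    exact hpv ((hCW v h).2.2)
  have hpC : T.parent v ∉ C := by
    intro h
    obtain ⟨hpW', hpr, hππ⟩ := hCW _ h
    have h2 := T.depth_parent _ hpW' hpr
    rw [hππ] at h2
    omega
  have hrC : T.root ∉ C := by
    intro h
    exact (hCW _ h).2.1 rfl
  have hCd : ∀ c ∈ C, T.depth c = T.depth v + 1 := by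
    intro c hc
    obtain ⟨h1, h2, h3⟩ := hCW c hc
    have h4 := T.depth_parent c h1 h2
    rw [h3] at h4
    exact h4
  obtain ⟨x, hxS, hmed⟩ := median_fin f hf (insert (T.parent v) C)
    ⟨T.parent v, Finset.mem_insert_self _ C⟩ v
  have hrv : T.root ≠ v := Ne.symm hvr
  have hsum_insert : ∀ z : Fin n, ∑ a ∈ insert (T.parent v) C, |f a - f z|
      = |f (T.parent v) - f z| + ∑ a ∈ C, |f a - f z| :=
    fun z => Finset.sum_insert hpC
  by_cases hxp : x = T.parent v
  · -- Case A : median is the parent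
    rw [hxp] at hmed
    refine ⟨{ verts := T.verts.erase v
              root := T.root
              root_mem := Finset.mem_erase.2 ⟨hrv, T.root_mem⟩
              parent := fun u => if T.parent u = v then T.parent v else T.parent u
              depth := fun u => if Desc T.parent T.root v u then T.depth u - 1 else T.depth u
              parent_mem := ?_
              depth_root := ?_
              root_of_depth_zero := ?_
              depth_parent := ?_ },
      rfl, rfl, ?_, ?_⟩
    · intro u huW' hur
      obtain ⟨huv, huW⟩ := Finset.mem_erase.1 huW'
      by_cases h : T.parent u = v
      · simp only [if_pos h]
        exact Finset.mem_erase.2 ⟨hpv, hpW⟩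
      · simp only [if_neg h]
        exact Finset.mem_erase.2 ⟨h, T.parent_mem u huW hur⟩
    · simp only [if_neg (T.not_desc_root hvr)]
      exact T.depth_root
    · intro u huW' hd0
      obtain ⟨huv, huW⟩ := Finset.mem_erase.1 huW'
      by_cases h : Desc T.parent T.root v u
      · simp only [if_pos h] at hd0
        have h2 := T.depth_lt_of_desc hvW h huW huv
        omega
      · simp only [if_neg h] at hd0
        exact T.root_of_depth_zero u huW hd0
    · intro u huW' hur
      obtain ⟨huv, huW⟩ := Finset.mem_erase.1 huW'
      have hδu : T.depth u = T.depth (T.parent u) + 1 := T.depth_parent u huW hur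
      by_cases h : T.parent u = v
      · have hdu : Desc T.parent T.root v u := .step u hur (h ▸ .base)
        have hndp : ¬ Desc T.parent T.root v (T.parent v) := by
          intro hdp
          have h3 := T.depth_lt_of_desc hvW hdp hpW hpv
          omega
        simp only [if_pos h, if_pos hdu, if_neg hndp]
        rw [h] at hδu
        omega
      · simp only [if_neg h]
        have hπuW : T.parent u ∈ T.verts := T.parent_mem u huW hur
        by_cases hd : Desc T.parent T.root v u
        · have hdp : Desc T.parent T.root v (T.parent u) := T.desc_parent hd huv
          have h2 : T.depth v ≤ T.depth (T.parent u) := T.depth_le_of_desc hvW _ hdp hπuW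
          simp only [if_pos hd, if_pos hdp]
          omega
        · have hdp : ¬ Desc T.parent T.root v (T.parent u) := T.not_desc_parent huW hur hd
          simp only [if_neg hd, if_neg hdp]
          exact hδu
    · -- IsKHop
      intro u huW'
      obtain ⟨huv, huW⟩ := Finset.mem_erase.1 huW'
      have h2 := hT u huW
      by_cases h : Desc T.parent T.root v u <;>
        simp only [h, if_true, if_false, if_pos, if_neg, not_false_iff] <;> omega
    · -- cost
      simp only [KTree.cost]
      have hecomm : (T.verts.erase v).erase T.root = (T.verts.erase T.root).erase v := by
        ext u; simp only [Finset.mem_erase]; tauto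
      rw [hecomm]
      have hvE : v ∈ T.verts.erase T.root := Finset.mem_erase.2 ⟨hvr, hvW⟩
      rw [← Finset.sum_erase_add (T.verts.erase T.root) _ hvE]
      have hEC : ((T.verts.erase T.root).erase v).filter (fun u => T.parent u = v) = C := by
        ext u
        simp only [hC, Finset.mem_filter, Finset.mem_erase]
        constructor
        · rintro ⟨⟨huv, hur, huW⟩, hπu⟩
          exact ⟨huW, hur, hπu⟩
        · rintro ⟨huW, hur, hπu⟩
          refine ⟨⟨?_, hur, huW⟩, hπu⟩
          intro h
          rw [h] at hπu
          exact hpv hπu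
      rw [← Finset.sum_filter_add_sum_filter_not ((T.verts.erase T.root).erase v)
          (fun u => T.parent u = v)
          (fun u => |f u - f (if T.parent u = v then T.parent v else T.parent u)|),
        ← Finset.sum_filter_add_sum_filter_not ((T.verts.erase T.root).erase v)
          (fun u => T.parent u = v)
          (fun u => |f u - f (T.parent u)|), hEC]
      have heq : ∑ u ∈ ((T.verts.erase T.root).erase v).filter (fun u => ¬ T.parent u = v),
            |f u - f (if T.parent u = v then T.parent v else T.parent u)|
          = ∑ u ∈ ((T.verts.erase T.root).erase v).filter (fun u => ¬ T.parent u = v),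
            |f u - f (T.parent u)| := by
        apply Finset.sum_congr rfl
        intro u hu
        have h2 := (Finset.mem_filter.1 hu).2
        rw [if_neg h2]
      rw [heq]
      have hkey : ∑ u ∈ C, |f u - f (if T.parent u = v then T.parent v else T.parent u)| ≤
          (∑ u ∈ C, |f u - f (T.parent u)|) + |f v - f (T.parent v)| := by
        have h1 : ∑ u ∈ C, |f u - f (if T.parent u = v then T.parent v else T.parent u)|
            = ∑ u ∈ C, |f u - f (T.parent v)| := by
          apply Finset.sum_congr rfl
          intro u hu
          rw [if_pos (hCW u hu).2.2]
        have h2 : ∑ u ∈ C, |f u - f (T.parent u)| = ∑ u ∈ C, |f u - f v| := by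
          apply Finset.sum_congr rfl
          intro u hu
          rw [(hCW u hu).2.2]
        rw [h1, h2]
        have hmm := hmed
        rw [hsum_insert (T.parent v), hsum_insert v] at hmm
        have hxx : |f (T.parent v) - f (T.parent v)| = 0 := by simp
        rw [hxx] at hmm
        rw [abs_sub_comm (f (T.parent v)) (f v)] at hmm
        linarith
      linarith
  · -- Case B : median is a child
    have hxC : x ∈ C := by
      rcases Finset.mem_insert.1 hxS with h | h
      · exact absurd h hxp
      · exact h
    obtain ⟨hxW, hxr, hπx⟩ := hCW x hxC
    have hδx : T.depth x = T.depth v + 1 := hCd x hxC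
    have hxv : x ≠ v := by intro h; rw [h] at hδx; omega
    have hndx_p : ¬ Desc T.parent T.root x (T.parent v) := by
      intro hd
      have h2 := T.depth_le_of_desc hxW _ hd hpW
      omega
    have hndx_of_depth : ∀ u ∈ T.verts, T.depth u ≤ T.depth v + 1 → u ≠ x →
        ¬ Desc T.parent T.root x u := by
      intro u huW hdu hux hd
      have h2 := T.depth_lt_of_desc hxW hd huW hux
      omega
    refine ⟨{ verts := T.verts.erase v
              root := T.root
              root_mem := Finset.mem_erase.2 ⟨hrv, T.root_mem⟩
              parent := fun u => if u = x then T.parent v else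
                if T.parent u = v then x else T.parent u
              depth := fun u => if Desc T.parent T.root x u then T.depth u - 1 else T.depth u
              parent_mem := ?_
              depth_root := ?_
              root_of_depth_zero := ?_
              depth_parent := ?_ },
      rfl, rfl, ?_, ?_⟩
    · intro u huW' hur
      obtain ⟨huv, huW⟩ := Finset.mem_erase.1 huW'
      by_cases hux : u = x
      · simp only [if_pos hux]
        exact Finset.mem_erase.2 ⟨hpv, hpW⟩
      · simp only [if_neg hux]
        by_cases h : T.parent u = v
        · simp only [if_pos h]
          exact Finset.mem_erase.2 ⟨hxv, hxW⟩
        · simp only [if_neg h]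
          exact Finset.mem_erase.2 ⟨h, T.parent_mem u huW hur⟩
    · simp only [if_neg (T.not_desc_root hxr)]
      exact T.depth_root
    · intro u huW' hd0
      obtain ⟨huv, huW⟩ := Finset.mem_erase.1 huW'
      by_cases h : Desc T.parent T.root x u
      · simp only [if_pos h] at hd0
        have h2 := T.depth_le_of_desc hxW u h huW
        omega
      · simp only [if_neg h] at hd0
        exact T.root_of_depth_zero u huW hd0
    · intro u huW' hur
      obtain ⟨huv, huW⟩ := Finset.mem_erase.1 huW'
      have hδu : T.depth u = T.depth (T.parent u) + 1 := T.depth_parent u huW hur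
      by_cases hux : u = x
      · subst hux
        have hdu : Desc T.parent T.root u u := .base
        simp only [eq_self_iff_true, if_true, if_pos hdu, if_neg hndx_p]
        omega
      · simp only [if_neg hux]
        by_cases h : T.parent u = v
        · have hcu : T.depth u = T.depth v + 1 := by rw [h] at hδu; exact hδu
          have hnd : ¬ Desc T.parent T.root x u := hndx_of_depth u huW (by omega) hux
          have hdx : Desc T.parent T.root x x := .base
          simp only [if_pos h, if_neg hnd, if_pos hdx]
          omega
        · simp only [if_neg h]
          have hπuW : T.parent u ∈ T.verts := T.parent_mem u huW hur
          by_cases hd : Desc T.parent T.root x u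
          · have hdp : Desc T.parent T.root x (T.parent u) := T.desc_parent hd hux
            have h2 : T.depth x ≤ T.depth (T.parent u) := T.depth_le_of_desc hxW _ hdp hπuW
            simp only [if_pos hd, if_pos hdp]
            omega
          · have hdp : ¬ Desc T.parent T.root x (T.parent u) := T.not_desc_parent huW hur hd
            simp only [if_neg hd, if_neg hdp]
            exact hδu
    · intro u huW'
      obtain ⟨huv, huW⟩ := Finset.mem_erase.1 huW'
      have h2 := hT u huW
      by_cases h : Desc T.parent T.root x u <;>
        simp only [h, if_true, if_false, if_pos, if_neg, not_false_iff] <;> omega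
    · -- cost case B
      simp only [KTree.cost]
      have hecomm : (T.verts.erase v).erase T.root = (T.verts.erase T.root).erase v := by
        ext u; simp only [Finset.mem_erase]; tauto
      rw [hecomm]
      have hvE : v ∈ T.verts.erase T.root := Finset.mem_erase.2 ⟨hvr, hvW⟩
      rw [← Finset.sum_erase_add (T.verts.erase T.root) _ hvE]
      have hEC : ((T.verts.erase T.root).erase v).filter (fun u => T.parent u = v) = C := by
        ext u
        simp only [hC, Finset.mem_filter, Finset.mem_erase]
        constructor
        · rintro ⟨⟨huv, hur, huW⟩, hπu⟩
          exact ⟨huW, hur, hπu⟩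
        · rintro ⟨huW, hur, hπu⟩
          refine ⟨⟨?_, hur, huW⟩, hπu⟩
          intro h
          rw [h] at hπu
          exact hpv hπu
      set g : Fin n → ℝ := fun u => |f u - f (if u = x then T.parent v else
        if T.parent u = v then x else T.parent u)| with hg
      rw [← Finset.sum_filter_add_sum_filter_not ((T.verts.erase T.root).erase v)
          (fun u => T.parent u = v) g,
        ← Finset.sum_filter_add_sum_filter_not ((T.verts.erase T.root).erase v)
          (fun u => T.parent u = v)
          (fun u => |f u - f (T.parent u)|), hEC]
      have heq : ∑ u ∈ ((T.verts.erase T.root).erase v).filter (fun u => ¬ T.parent u = v), g u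
          = ∑ u ∈ ((T.verts.erase T.root).erase v).filter (fun u => ¬ T.parent u = v),
            |f u - f (T.parent u)| := by
        apply Finset.sum_congr rfl
        intro u hu
        have h2 := (Finset.mem_filter.1 hu).2
        have hux : u ≠ x := by intro h; rw [h] at h2; exact h2 hπx
        rw [hg]
        simp only [if_neg hux, if_neg h2]
      rw [heq]
      have hkey : ∑ u ∈ C, g u ≤ (∑ u ∈ C, |f u - f (T.parent u)|) + |f v - f (T.parent v)| := by
        rw [← Finset.sum_erase_add C g hxC]
        have h1 : ∑ u ∈ C.erase x, g u = ∑ u ∈ C.erase x, |f u - f x| := by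
          apply Finset.sum_congr rfl
          intro u hu
          obtain ⟨hux, huC⟩ := Finset.mem_erase.1 hu
          rw [hg]
          simp only [if_neg hux, if_pos (hCW u huC).2.2]
        have hgx : g x = |f x - f (T.parent v)| := by rw [hg]; simp only [eq_self_iff_true, if_true]
        have h2 : ∑ u ∈ C, |f u - f (T.parent u)| = ∑ u ∈ C, |f u - f v| := by
          apply Finset.sum_congr rfl
          intro u hu
          rw [(hCW u hu).2.2]
        rw [h1, hgx, h2]
        have hmm := hmed
        rw [hsum_insert x, hsum_insert v] at hmm
        have h3 : ∑ a ∈ C, |f a - f x| = ∑ a ∈ C.erase x, |f a - f x| := by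
          rw [← Finset.sum_erase_add C _ hxC]
          simp
        rw [h3] at hmm
        rw [abs_sub_comm (f (T.parent v)) (f v)] at hmm
        rw [abs_sub_comm (f (T.parent v)) (f x)] at hmm
        linarith
      linarith

lemma reduceToX {n : ℕ} (f : Fin n → ℝ) (hf : StrictMono f) (k : ℕ)
    (X : Finset (Fin n)) (r : Fin n) (hr : r ∈ X) :
    ∀ m (T : KTree (Fin n)), T.verts.card ≤ m → T.root = r → X ⊆ T.verts → T.IsKHop k →
      ∃ T'' : KTree (Fin n), T''.verts = X ∧ T''.root = r ∧ T''.IsKHop k ∧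
        T''.cost (fun i j => |f i - f j|) ≤ T.cost (fun i j => |f i - f j|) := by
  intro m
  induction m with
  | zero =>
      intro T hc hroot hX hk
      have h1 : r ∈ T.verts := hX hr
      have h2 := Finset.card_pos.2 ⟨r, h1⟩
      omega
  | succ m ih =>
      intro T hc hroot hXT hkh
      by_cases hEq : T.verts = X
      · exact ⟨T, hEq, hroot, hkh, le_rfl⟩
      · have hex : ∃ v ∈ T.verts, v ∉ X := by
          by_contra h
          push_neg at h
          exact hEq (Finset.Subset.antisymm h hXT)
        obtain ⟨v, hvW, hvX⟩ := hex
        have hvr : v ≠ T.root := by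
          rw [hroot]
          intro h
          exact hvX (h ▸ hr)
        obtain ⟨T', h1, h2, h3, h4⟩ := removeSteiner f hf k T hkh v hvW hvr
        have hcard : T'.verts.card ≤ m := by
          rw [h2, Finset.card_erase_of_mem hvW]
          omega
        have hXT' : X ⊆ T'.verts := by
          rw [h2]
          intro u hu
          exact Finset.mem_erase.2 ⟨fun he => hvX (he ▸ hu), hXT hu⟩
        obtain ⟨T'', a1, a2, a3, a4⟩ := ih T' hcard (h1.trans hroot) hXT' h3
        exact ⟨T'', a1, a2, a3, a4.trans h4⟩

/-- For points on the real line (path metric), terminals X with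
root r ∈ X and k ≥ 1, there is a minimum-cost k-hop Steiner tree whose vertex
set is exactly X. -/
theorem stmt0 (n : ℕ) (f : Fin n → ℝ) (hf : StrictMono f)
    (X : Finset (Fin n)) (r : Fin n) (hr : r ∈ X) (k : ℕ) (hk : 1 ≤ k) :
    ∃ T : KTree (Fin n), T.root = r ∧ X ⊆ T.verts ∧ T.IsKHop k ∧ T.verts = X ∧
      ∀ T' : KTree (Fin n), T'.root = r → X ⊆ T'.verts → T'.IsKHop k →
        T.cost (fun i j => |f i - f j|) ≤ T'.cost (fun i j => |f i - f j|) := by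
  classical
  set A : Set ℝ := {c | ∃ T : KTree (Fin n), (T.verts = X ∧ T.root = r ∧ T.IsKHop k) ∧
    T.cost (fun i j => |f i - f j|) = c} with hA
  have hAfin : A.Finite := by
    apply Set.Finite.subset (Set.finite_range
      (fun π : Fin n → Fin n => ∑ v ∈ X.erase r, |f v - f (π v)|))
    rintro c ⟨T, ⟨hv, hroot, _⟩, rfl⟩
    exact ⟨T.parent, by rw [KTree.cost, hv, hroot]⟩
  have hAne : A.Nonempty := by
    refine ⟨_, ⟨{ verts := X
                  root := r
                  root_mem := hr
                  parent := fun _ => r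
                  depth := fun u => if u = r then 0 else 1
                  parent_mem := fun v _ _ => hr
                  depth_root := if_pos rfl
                  root_of_depth_zero := ?_
                  depth_parent := ?_ }, ⟨rfl, rfl, ?_⟩, rfl⟩⟩
    · intro u _ h
      by_contra hur
      simp only [if_neg hur] at h
      exact one_ne_zero h
    · intro u _ hur
      simp only [if_neg hur, eq_self_iff_true, if_true]
    · intro u _
      by_cases h : u = r <;> simp only [h, if_true, if_false, if_pos, if_neg, not_false_iff] <;>
        omega
  obtain ⟨c, hcA, hcmin⟩ := Set.exists_min_image A id hAfin hAne
  obtain ⟨T, ⟨hTv, hTr, hTk⟩, hTc⟩ := hcA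
  refine ⟨T, hTr, hTv.symm ▸ Finset.Subset.refl X, hTk, hTv, ?_⟩
  intro T' hroot' hX' hk'
  obtain ⟨T'', a1, a2, a3, a4⟩ := reduceToX f hf k X r hr T'.verts.card T' le_rfl hroot' hX' hk'
  have hT'' : T''.cost (fun i j => |f i - f j|) ∈ A := ⟨T'', ⟨a1, a2, a3⟩, rfl⟩
  have := hcmin _ hT''
  simp only [id] at this
  rw [hTc]
  exact le_trans this a4
end

section
/- Let v_1 < v_2 < ... < v_n be points on the real line with metric d(u,v) = |u - v|, and let T be a minimum-cost k-hop spanning tree rooted at r. Suppose s is a vertex of T with depth ℓ(s) < k, and i is a vertex to the left of s (i.e., i < s as real numbers) with depth ℓ(i) > ℓ(s). Then no child of i in T lies to the right of s. (Otherwise, reattaching such a child j directly to s strictly decreases the cost without increasing any depth beyond k.) -/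
open Finset

/-- In a minimum-cost k-hop spanning tree on points of the real
line, if s has depth < k and i lies to the left of s with depth(i) > depth(s),
then no child of i lies to the right of s. -/
theorem stmt1 (n : ℕ) (f : Fin n → ℝ) (hf : StrictMono f) (r : Fin n) (k : ℕ)
    (T : KTree (Fin n)) (hroot : T.root = r) (hspan : T.verts = Finset.univ)
    (hhop : T.IsKHop k)
    (hmin : ∀ T' : KTree (Fin n), T'.root = r → T'.verts = Finset.univ → T'.IsKHop k →
      T.cost (fun i j => |f i - f j|) ≤ T'.cost (fun i j => |f i - f j|))
    (s i : Fin n) (hs : T.depth s < k) (hlt : f i < f s) (hdep : T.depth s < T.depth i) :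
    ∀ j : Fin n, j ≠ r → T.parent j = i → ¬ (f s < f j) := by
  classical
  intro j hjr hpj hsj
  have hjroot : j ≠ T.root := by rw [hroot]; exact hjr
  have hmem : ∀ v : Fin n, v ∈ T.verts := by rw [hspan]; exact fun v => mem_univ v
  have hdj : T.depth j = T.depth i + 1 := by
    have := T.depth_parent j (hmem j) hjroot
    rwa [hpj] at this
  have hdjs : T.depth s + 2 ≤ T.depth j := by omega
  -- the subtree of j
  set P : Fin n → Prop := fun v => ∃ m, T.parent^[m] v = j ∧ T.depth v = T.depth j + m
    with hPdef
  set Δ : ℕ := T.depth j - T.depth s - 1 with hΔ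
  have hPj : P j := ⟨0, rfl, by simp⟩
  have hPdepth : ∀ v, P v → T.depth j ≤ T.depth v := by
    rintro v ⟨m, _, h2⟩; omega
  have hProot : ¬ P T.root := by
    intro h
    have h1 := hPdepth _ h
    have h2 : T.depth j ≠ 0 := fun h0 => hjroot (T.root_of_depth_zero j (hmem j) h0)
    rw [T.depth_root] at h1; omega
  have hPs : ¬ P s := fun h => by have := hPdepth _ h; omega
  have hP_parent : ∀ v, v ≠ T.root → v ≠ j → P v → P (T.parent v) := by
    rintro v hvr hvj ⟨m, h1, h2⟩
    rcases m with _ | m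
    · exact absurd h1 hvj
    · refine ⟨m, ?_, ?_⟩
      · rw [← Function.iterate_succ_apply]; exact h1
      · have := T.depth_parent v (hmem v) hvr; omega
  have hP_child : ∀ v, v ≠ T.root → P (T.parent v) → P v := by
    rintro v hvr ⟨m, h1, h2⟩
    refine ⟨m + 1, ?_, ?_⟩
    · rw [Function.iterate_succ_apply]; exact h1
    · have := T.depth_parent v (hmem v) hvr; omega
  -- the modified tree
  set T' : KTree (Fin n) :=
    { verts := Finset.univ
      root := T.root
      root_mem := mem_univ _
      parent := fun v => if v = j then s else T.parent v
      depth := fun v => if P v then T.depth v - Δ else T.depth v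
      parent_mem := fun v _ _ => mem_univ _
      depth_root := by simp only [if_neg hProot, T.depth_root]
      root_of_depth_zero := by
        intro v _ hv
        by_cases h : P v
        · simp only [if_pos h] at hv
          have := hPdepth v h
          omega
        · simp only [if_neg h] at hv
          exact T.root_of_depth_zero v (hmem v) hv
      depth_parent := by
        intro v _ hvr
        by_cases hvj : v = j
        · subst hvj
          simp only [eq_self_iff_true, if_true, if_pos hPj, if_neg hPs]
          omega
        · simp only [if_neg hvj]
          by_cases h : P v
          · have hpv := hP_parent v hvr hvj h
            have h1 := hPdepth v h
            have h2 := hPdepth _ hpv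
            have h3 := T.depth_parent v (hmem v) hvr
            simp only [if_pos h, if_pos hpv]
            omega
          · have hpv : ¬ P (T.parent v) := fun hh => h (hP_child v hvr hh)
            simp only [if_neg h, if_neg hpv]
            exact T.depth_parent v (hmem v) hvr } with hT'
  have hhop' : T'.IsKHop k := by
    intro v _
    show (if P v then T.depth v - Δ else T.depth v) ≤ k
    have := hhop v (hmem v)
    split <;> omega
  have hle := hmin T' hroot rfl hhop'
  have hcost : T'.cost (fun i j => |f i - f j|) < T.cost (fun i j => |f i - f j|) := by
    unfold KTree.cost
    show ∑ v ∈ Finset.univ.erase T.root, |f v - f (if v = j then s else T.parent v)| < _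
    rw [hspan]
    apply Finset.sum_lt_sum
    · intro v hv
      by_cases hvj : v = j
      · subst hvj
        simp only [eq_self_iff_true, if_true, hpj]
        have hij : f i < f v := lt_trans hlt hsj
        rw [abs_of_pos (by linarith), abs_of_pos (by linarith)]
        linarith
      · rw [if_neg hvj]
    · refine ⟨j, Finset.mem_erase.mpr ⟨hjroot, mem_univ _⟩, ?_⟩
      simp only [eq_self_iff_true, if_true, hpj]
      have hij : f i < f j := lt_trans hlt hsj
      rw [abs_of_pos (by linarith), abs_of_pos (by linarith)]
      linarith
  linarith
end

section
/- Let (V, d) be a finite metric space, X = V, r ∈ V, k ≥ 1, and δ > 0. Let U ⊆ V be a δ-net of V with r ∈ U. Then the minimum cost of a k-hop spanning tree on the metric subspace (U, d) rooted at r is at most OPT_k(V) + 2δ·|V|, where OPT_k(V) is the minimum cost of a k-hop spanning tree on V rooted at r. (Proof idea: take an optimal k-hop spanning tree on V and replace each vertex by a closest net point; each edge cost increases by at most 2δ, and contracting duplicates only decreases cost.) -/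
open Finset

/-- Auxiliary: the star tree rooted at `r` on vertex set `s`. -/
def starTree {V : Type} (s : Finset V) (r : V) (hr : r ∈ s) [DecidableEq V] : KTree V where
  verts := s
  root := r
  root_mem := hr
  parent := fun _ => r
  depth := fun v => if v = r then 0 else 1
  parent_mem := fun _ _ _ => hr
  depth_root := if_pos rfl
  root_of_depth_zero := fun v _ h => by by_contra hv; simp [hv] at h
  depth_parent := fun v _ hv => by simp [hv]

lemma starTree_khop {V : Type} [DecidableEq V] (s : Finset V) (r : V) (hr : r ∈ s)
    (k : ℕ) (hk : 1 ≤ k) : (starTree s r hr).IsKHop k := by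
  intro v _
  simp only [starTree]
  split_ifs <;> omega

lemma cost_nonneg {V : Type} [DecidableEq V] [MetricSpace V] (T : KTree V) :
    0 ≤ T.cost dist :=
  Finset.sum_nonneg fun _ _ => dist_nonneg

/-- Project an optimal tree on the whole space to a tree on the net. -/
lemma project (V : Type) [Fintype V] [DecidableEq V] [MetricSpace V]
    (r : V) (k : ℕ) (δ : ℝ) (hδ : 0 < δ)
    (U : Finset V) (hrU : r ∈ U)
    (hnet : ∀ v : V, ∃ u ∈ U, dist u v ≤ δ)
    (hsep : ∀ u ∈ U, ∀ w ∈ U, u ≠ w → δ < dist u w)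
    (T : KTree V) (hroot : T.root = r) (hverts : T.verts = Finset.univ)
    (hhop : T.IsKHop k) :
    ∃ T' : KTree V, T'.root = r ∧ T'.verts = U ∧ T'.IsKHop k ∧
      T'.cost dist ≤ T.cost dist + 2 * δ * (Fintype.card V : ℝ) := by
  classical
  choose π hπU hπd using hnet
  have hπid : ∀ u ∈ U, π u = u := by
    intro u hu
    by_contra h
    exact absurd (hπd u) (not_le.mpr (hsep _ (hπU u) _ hu h))
  -- representative of minimal depth in each class
  have hrep : ∀ u : V, ∃ v, π v = π u ∧ ∀ w, π w = π u → T.depth v ≤ T.depth w := by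
    intro u
    obtain ⟨v, hv, hmin⟩ := Finset.exists_min_image
      (univ.filter (fun w => π w = π u)) T.depth ⟨u, by simp⟩
    exact ⟨v, (mem_filter.mp hv).2, fun w hw => hmin w (by simp [hw])⟩
  choose rep hπrep hmin using hrep
  have hπrepU : ∀ u ∈ U, π (rep u) = u := fun u hu => by rw [hπrep u, hπid u hu]
  have hrdist : ∀ u ∈ U, dist u (rep u) ≤ δ := by
    intro u hu
    have := hπd (rep u)
    rwa [hπrepU u hu] at this
  have hdepthr : T.depth r = 0 := by rw [← hroot, T.depth_root]
  have hm0 : ∀ u ∈ U, T.depth (rep u) = 0 → u = r := by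
    intro u hu h0
    have : rep u = r := by
      rw [← hroot]; exact T.root_of_depth_zero _ (by rw [hverts]; exact mem_univ _) h0
    rw [← hπrepU u hu, this, hπid r hrU]
  set p : V → V := fun u => if u = r then r else π (T.parent (rep u)) with hp
  have hpU : ∀ u, u ≠ r → p u = π (T.parent (rep u)) := fun u hu => if_neg hu
  have hpmem : ∀ u, u ≠ r → p u ∈ U := by
    intro u hu; rw [hpU u hu]; exact hπU _
  have hrepnr : ∀ u ∈ U, u ≠ r → rep u ≠ r := by
    intro u hu hur h
    apply hur
    rw [← hπrepU u hu, h, hπid r hrU]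
  have hdec : ∀ u ∈ U, u ≠ r → T.depth (rep (p u)) < T.depth (rep u) := by
    intro u hu hur
    have hstep : T.depth (rep u) = T.depth (T.parent (rep u)) + 1 :=
      T.depth_parent _ (by rw [hverts]; exact mem_univ _) (hroot ▸ hrepnr u hu hur)
    have h1 : T.depth (rep (p u)) ≤ T.depth (T.parent (rep u)) := by
      apply hmin
      rw [hπid _ (hpmem u hur), hpU u hur]
    omega
  -- reachability
  have hreach : ∀ n, ∀ u ∈ U, T.depth (rep u) ≤ n → ∃ j, p^[j] u = r := by
    intro n
    induction n with
    | zero =>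
      intro u hu h0
      exact ⟨0, hm0 u hu (Nat.le_zero.mp h0)⟩
    | succ n ih =>
      intro u hu hle
      by_cases hur : u = r
      · exact ⟨0, hur⟩
      · obtain ⟨j, hj⟩ := ih (p u) (hpmem u hur) (by have := hdec u hu hur; omega)
        exact ⟨j + 1, by rw [Function.iterate_succ_apply]; exact hj⟩
  set dep : V → ℕ := fun u => if h : ∃ j, p^[j] u = r then Nat.find h else 0 with hdep
  have hexr : ∃ j, p^[j] r = r := ⟨0, rfl⟩
  have hdepr : dep r = 0 := by
    rw [hdep]
    simp only [dif_pos hexr]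
    exact Nat.find_eq_zero hexr |>.mpr rfl
  have hdepU : ∀ v ∈ U, ∃ j, p^[j] v = r := fun v hv => hreach _ v hv le_rfl
  have hdep0 : ∀ v ∈ U, dep v = 0 → v = r := by
    intro v hvU hv
    have h := hdepU v hvU
    rw [hdep] at hv
    simp only [dif_pos h] at hv
    have := Nat.find_spec h
    rwa [hv, Function.iterate_zero_apply] at this
  have hdepp : ∀ v ∈ U, v ≠ r → dep v = dep (p v) + 1 := by
    intro v hvU hvr
    have h := hdepU v hvU
    have h' := hdepU (p v) (hpmem v hvr)
    rw [hdep]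
    simp only [dif_pos h, dif_pos h']
    apply le_antisymm
    · exact Nat.find_le (by rw [Function.iterate_succ_apply]; exact Nat.find_spec h')
    · have h0 : Nat.find h ≠ 0 := by
        intro e
        have := Nat.find_spec h
        rw [e, Function.iterate_zero_apply] at this
        exact hvr this
      obtain ⟨m, hm⟩ := Nat.exists_eq_succ_of_ne_zero h0
      have hms : p^[m] (p v) = r := by
        rw [← Function.iterate_succ_apply, ← hm]
        exact Nat.find_spec h
      rw [hm]
      exact Nat.succ_le_succ (Nat.find_le hms)
  have hdeple : ∀ n, ∀ v ∈ U, T.depth (rep v) ≤ n → dep v ≤ n := by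
    intro n
    induction n with
    | zero =>
      intro v hv h0
      rw [hm0 v hv (Nat.le_zero.mp h0), hdepr]
    | succ n ih =>
      intro v hv hle
      by_cases hvr : v = r
      · rw [hvr, hdepr]; omega
      · rw [hdepp v hv hvr]
        have := ih (p v) (hpmem v hvr) (by have := hdec v hv hvr; omega)
        omega
  refine ⟨⟨U, r, hrU, p, dep, fun v _ => hpmem v, hdepr, hdep0, hdepp⟩, rfl, rfl, ?_, ?_⟩
  · intro v hv
    exact le_trans (hdeple _ v hv le_rfl)
      (hhop (rep v) (by rw [hverts]; exact mem_univ _))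
  · -- cost bound
    have hcost : ∀ v ∈ U.erase r,
        dist v (p v) ≤ dist (rep v) (T.parent (rep v)) + 2 * δ := by
      intro v hv
      obtain ⟨hvr, hvU⟩ := mem_erase.mp hv
      rw [hpU v hvr]
      have h1 : dist v (π (T.parent (rep v))) ≤
          dist v (rep v) + dist (rep v) (T.parent (rep v)) +
            dist (T.parent (rep v)) (π (T.parent (rep v))) := dist_triangle4 _ _ _ _
      have h2 := hrdist v hvU
      have h3 : dist (T.parent (rep v)) (π (T.parent (rep v))) ≤ δ := by
        rw [dist_comm]; exact hπd _
      linarith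
    have hsum : (∑ v ∈ U.erase r, dist (rep v) (T.parent (rep v))) ≤ T.cost dist := by
      have hinj : ∀ a ∈ U.erase r, ∀ b ∈ U.erase r, rep a = rep b → a = b := by
        intro a ha b hb hab
        rw [← hπrepU a (mem_of_mem_erase ha), hab, hπrepU b (mem_of_mem_erase hb)]
      rw [show (∑ v ∈ U.erase r, dist (rep v) (T.parent (rep v)))
          = ∑ w ∈ (U.erase r).image rep, dist w (T.parent w) from
        (Finset.sum_image (f := fun w => dist w (T.parent w)) hinj).symm]
      unfold KTree.cost
      apply Finset.sum_le_sum_of_subset_of_nonneg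
      · intro w hw
        obtain ⟨v, hv, hvw⟩ := Finset.mem_image.mp hw
        obtain ⟨hvr, hvU⟩ := mem_erase.mp hv
        rw [hverts, hroot]
        exact mem_erase.mpr ⟨hvw ▸ hrepnr v hvU hvr, mem_univ _⟩
      · intro _ _ _; exact dist_nonneg
    have hcard : ((U.erase r).card : ℝ) ≤ (Fintype.card V : ℝ) := by
      exact_mod_cast le_trans (Finset.card_le_card (Finset.erase_subset _ _))
        (Finset.card_le_univ U)
    show (∑ v ∈ U.erase r, dist v (p v)) ≤ _
    calc (∑ v ∈ U.erase r, dist v (p v))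
        ≤ ∑ v ∈ U.erase r, (dist (rep v) (T.parent (rep v)) + 2 * δ) :=
          Finset.sum_le_sum hcost
      _ = (∑ v ∈ U.erase r, dist (rep v) (T.parent (rep v))) + 2 * δ * (U.erase r).card := by
          rw [Finset.sum_add_distrib, Finset.sum_const, nsmul_eq_mul]; ring
      _ ≤ T.cost dist + 2 * δ * (Fintype.card V : ℝ) := by
          have : 2 * δ * ((U.erase r).card : ℝ) ≤ 2 * δ * (Fintype.card V : ℝ) := by
            apply mul_le_mul_of_nonneg_left hcard; linarith
          linarith

/-- For a δ-net U ∋ r of (V,d), the minimum cost of a k-hop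
spanning tree on U is at most OPT_k(V) + 2δ|V|. -/
theorem stmt5 (V : Type) [Fintype V] [DecidableEq V] [MetricSpace V]
    (r : V) (k : ℕ) (hk : 1 ≤ k) (δ : ℝ) (hδ : 0 < δ)
    (U : Finset V) (hrU : r ∈ U)
    (hnet : ∀ v : V, ∃ u ∈ U, dist u v ≤ δ)
    (hsep : ∀ u ∈ U, ∀ w ∈ U, u ≠ w → δ < dist u w) :
    sInf {c : ℝ | ∃ T : KTree V, T.root = r ∧ T.verts = U ∧ T.IsKHop k ∧ T.cost dist = c} ≤
      sInf {c : ℝ | ∃ T : KTree V, T.root = r ∧ T.verts = Finset.univ ∧ T.IsKHop k ∧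
          T.cost dist = c} +
        2 * δ * (Fintype.card V : ℝ) := by
  classical
  set A := {c : ℝ | ∃ T : KTree V, T.root = r ∧ T.verts = U ∧ T.IsKHop k ∧ T.cost dist = c}
    with hA
  set B := {c : ℝ | ∃ T : KTree V, T.root = r ∧ T.verts = Finset.univ ∧ T.IsKHop k ∧
      T.cost dist = c} with hB
  have hAbdd : BddBelow A := by
    refine ⟨0, ?_⟩
    rintro c ⟨T, -, -, -, rfl⟩
    exact cost_nonneg T
  have hBne : B.Nonempty :=
    ⟨(starTree Finset.univ r (mem_univ r)).cost dist,
      starTree Finset.univ r (mem_univ r), rfl, rfl,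
      starTree_khop _ _ _ k hk, rfl⟩
  have key : ∀ c ∈ B, sInf A ≤ c + 2 * δ * (Fintype.card V : ℝ) := by
    rintro c ⟨T, hroot, hverts, hhop, rfl⟩
    obtain ⟨T', hr', hv', hh', hc'⟩ :=
      project V r k δ hδ U hrU hnet hsep T hroot hverts hhop
    have hmem : T'.cost dist ∈ A := ⟨T', hr', hv', hh', rfl⟩
    exact le_trans (csInf_le hAbdd hmem) hc'
  have : sInf A - 2 * δ * (Fintype.card V : ℝ) ≤ sInf B := by
    apply le_csInf hBne
    intro b hb
    have := key b hb
    linarith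
  linarith
end

section
/- Let v_1 < ... < v_n be points on a line with metric d(u,v) = |u−v|, and let A[p, s, a, b] denote the minimum cost of a tree rooted at v_s of depth at most p spanning all points v_i with i ∈ [a, b] (where s ∉ [a, b]), with A[p, s, a, b] = 0 when a > b. Then for p = 1, A[1, s, a, b] = Σ_{x ∈ [a,b]} d(v_s, v_x); and for p > 1 and a ≤ b, A[p, s, a, b] = min over s' ∈ [a, b] and c ∈ [a, s'] of ( d(v_{s'}, v_s) + A[p, s, a, c−1] + A[p−1, s', c, s'−1] + A[p−1, s', s'+1, b] ). -/
open Finset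

/-- `lineA f p s a b`: the minimum cost of a tree rooted at point s of depth at
most p spanning exactly the points with indices in [a,b] (positions given by
f), on the line metric d i j = |f i - f j|. -/
noncomputable def lineA (f : ℤ → ℝ) (p : ℕ) (s a b : ℤ) : ℝ :=
  sInf {c : ℝ | ∃ T : KTree ℤ, T.root = s ∧ T.verts = insert s (Finset.Icc a b) ∧
    T.IsKHop p ∧ T.cost (fun i j => |f i - f j|) = c}

/-!
Trees are handled through a parent map together with a rank that strictly decreases towards the
root and is at most `p`; reattaching a vertex to any vertex of smaller rank then gives another
admissible tree. Gluing optimal trees for the three blocks shows that the recursion is an upper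
bound. For the lower bound take an optimal tree whose ranks are the depths. Reattaching a vertex
to a shallower vertex strictly between it and its parent would shorten its edge, and two crossing
edges at the same depth can be uncrossed at a strictly smaller cost. Hence the child `top x` of the
root above `x` is monotone in `x`: the subtree of the right-most child `s'` is a suffix `[c', b]`,
and none of its edges crosses `s'`.
-/

/-- The rank bounds the depth without being equal to it, so that reattaching a vertex does not
force a renumbering of its subtree. -/
structure RankedTree {α : Type} [DecidableEq α] (p : ℕ) (s : α) (V : Finset α) where
  par : α → α
  rank : α → ℕ
  rank_root : rank s = 0
  par_mem : ∀ x ∈ V, par x ∈ insert s V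
  rank_par_lt : ∀ x ∈ V, rank (par x) < rank x
  rank_le : ∀ x ∈ V, rank x ≤ p

namespace RankedTree

variable {α : Type} [DecidableEq α] {p : ℕ} {s : α} {V : Finset α}

def cost (d : α → α → ℝ) (R : RankedTree p s V) : ℝ :=
  ∑ x ∈ V, d x (R.par x)

theorem rank_pos (R : RankedTree p s V) {x : α} (hx : x ∈ V) : 0 < R.rank x :=
  (Nat.zero_le _).trans_lt (R.rank_par_lt x hx)

theorem root_notMem (R : RankedTree p s V) : s ∉ V :=
  fun hs => (R.rank_pos hs).ne' R.rank_root

theorem par_mem_of_ne (R : RankedTree p s V) {x : α} (hx : x ∈ V) (h : R.par x ≠ s) :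
    R.par x ∈ V :=
  (mem_insert.1 (R.par_mem x hx)).resolve_left h

theorem par_eq_root_of_le_one (R : RankedTree p s V) (hp : p ≤ 1) {x : α} (hx : x ∈ V) :
    R.par x = s := by
  by_contra h
  have := R.rank_pos (R.par_mem_of_ne hx h)
  have := R.rank_par_lt x hx
  have := R.rank_le x hx
  omega

def reattach (R : RankedTree p s V) (w q : α) (hq : q ∈ insert s V)
    (hlt : R.rank q < R.rank w) : RankedTree p s V where
  par := Function.update R.par w q
  rank := R.rank
  rank_root := R.rank_root
  par_mem x hx := by
    rcases eq_or_ne x w with rfl | hxw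
    · simpa using hq
    · simpa [hxw] using R.par_mem x hx
  rank_par_lt x hx := by
    rcases eq_or_ne x w with rfl | hxw
    · simpa using hlt
    · simpa [hxw] using R.rank_par_lt x hx
  rank_le := R.rank_le

theorem cost_reattach (d : α → α → ℝ) (R : RankedTree p s V) {w q : α} (hq : q ∈ insert s V)
    (hlt : R.rank q < R.rank w) (hw : w ∈ V) :
    (R.reattach w q hq hlt).cost d + d w (R.par w) = R.cost d + d w q := by
  have hrest : ∑ x ∈ V.erase w, d x (Function.update R.par w q x) =
      ∑ x ∈ V.erase w, d x (R.par x) :=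
    sum_congr rfl fun x hx => by rw [Function.update_of_ne (ne_of_mem_erase hx)]
  simp only [cost, reattach]
  rw [← add_sum_erase V _ hw, ← add_sum_erase V _ hw, Function.update_self, hrest]
  ring

def IsOptimal (d : α → α → ℝ) (R : RankedTree p s V) : Prop :=
  ∀ R' : RankedTree p s V, R.cost d ≤ R'.cost d

namespace IsOptimal

variable {d : α → α → ℝ} {R : RankedTree p s V}

theorem dist_par_le (hR : R.IsOptimal d) {w q : α} (hw : w ∈ V) (hq : q ∈ insert s V)
    (hlt : R.rank q < R.rank w) : d w (R.par w) ≤ d w q := by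
  have := hR (R.reattach w q hq hlt)
  linarith [R.cost_reattach d hq hlt hw]

/-- The parents of two vertices of equal rank can be exchanged. -/
theorem dist_par_add_dist_par_le (hR : R.IsOptimal d) {w u : α} (hw : w ∈ V) (hu : u ∈ V)
    (hwu : w ≠ u) (hrank : R.rank w = R.rank u) :
    d w (R.par w) + d u (R.par u) ≤ d w (R.par u) + d u (R.par w) := by
  have hlt₁ : R.rank (R.par u) < R.rank w := hrank ▸ R.rank_par_lt u hu
  let R₁ := R.reattach w (R.par u) (R.par_mem u hu) hlt₁
  have hlt₂ : R₁.rank (R.par w) < R₁.rank u := hrank ▸ R.rank_par_lt w hw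
  have hpar₁ : R₁.par u = R.par u := Function.update_of_ne hwu.symm _ _
  have h₁ := R.cost_reattach d (R.par_mem u hu) hlt₁ hw
  have h₂ := R₁.cost_reattach d (R.par_mem w hw) hlt₂ hu
  rw [hpar₁] at h₂
  linarith [hR (R₁.reattach u (R.par w) (R.par_mem w hw) hlt₂)]

end IsOptimal

def IsGraded (R : RankedTree p s V) : Prop :=
  ∀ x ∈ V, R.rank (R.par x) + 1 = R.rank x

/-- For a graded tree, the child of the root above `x`. -/
def top (R : RankedTree p s V) (x : α) : α :=
  R.par^[R.rank x - 1] x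

namespace IsGraded

variable {R : RankedTree p s V} {x : α}

theorem par_eq_root_iff (hR : R.IsGraded) (hx : x ∈ V) : R.par x = s ↔ R.rank x = 1 := by
  have := hR x hx
  constructor
  · intro h
    rw [h, R.rank_root] at this
    omega
  · intro h
    by_contra hne
    have := R.rank_pos (R.par_mem_of_ne hx hne)
    omega

theorem top_eq_self (hR : R.IsGraded) (hx : x ∈ V) (h : R.par x = s) : R.top x = x := by
  simp [top, (hR.par_eq_root_iff hx).1 h]

theorem top_par (hR : R.IsGraded) (hx : x ∈ V) (h : R.par x ≠ s) : R.top (R.par x) = R.top x := by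
  have := hR x hx
  have := R.rank_pos (R.par_mem_of_ne hx h)
  rw [top, top, show R.rank x - 1 = R.rank (R.par x) - 1 + 1 by omega,
    Function.iterate_succ_apply]

theorem top_mem_and_par_top (hR : R.IsGraded) (hx : x ∈ V) : R.top x ∈ V ∧ R.par (R.top x) = s := by
  induction hn : R.rank x using Nat.strong_induction_on generalizing x with
  | _ n ih =>
    by_cases h : R.par x = s
    · rw [hR.top_eq_self hx h]
      exact ⟨hx, h⟩
    · rw [← hR.top_par hx h]
      exact ih _ (hn ▸ R.rank_par_lt x hx) (R.par_mem_of_ne hx h) rfl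

end IsGraded

theorem exists_iterate_par_eq_root (R : RankedTree p s V) {x : α} (hx : x ∈ insert s V) :
    ∃ k ≤ R.rank x, R.par^[k] x = s := by
  induction hn : R.rank x using Nat.strong_induction_on generalizing x with
  | _ n ih =>
    rcases mem_insert.1 hx with rfl | hxV
    · exact ⟨0, Nat.zero_le _, rfl⟩
    · have hlt := R.rank_par_lt x hxV
      obtain ⟨k, hk, hks⟩ := ih _ (hn ▸ hlt) (R.par_mem x hxV) rfl
      exact ⟨k + 1, by omega, hks⟩

open Classical in
noncomputable def depth (R : RankedTree p s V) (x : α) : ℕ :=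
  if h : ∃ k, R.par^[k] x = s then Nat.find h else 0

theorem depth_le_rank (R : RankedTree p s V) {x : α} (hx : x ∈ insert s V) :
    R.depth x ≤ R.rank x := by
  obtain ⟨k, hk, hks⟩ := R.exists_iterate_par_eq_root hx
  rw [depth, dif_pos ⟨k, hks⟩]
  exact (Nat.find_le hks).trans hk

theorem depth_eq_zero_iff (R : RankedTree p s V) {x : α} (hx : x ∈ insert s V) :
    R.depth x = 0 ↔ x = s := by
  obtain ⟨k, -, hks⟩ := R.exists_iterate_par_eq_root hx
  rw [depth, dif_pos ⟨k, hks⟩, Nat.find_eq_zero]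
  rfl

theorem depth_par (R : RankedTree p s V) {x : α} (hx : x ∈ V) :
    R.depth x = R.depth (R.par x) + 1 := by
  obtain ⟨k, -, hks⟩ := R.exists_iterate_par_eq_root (R.par_mem x hx)
  have hne : x ≠ s := ne_of_mem_of_not_mem hx R.root_notMem
  rw [depth, depth, dif_pos ⟨k + 1, hks⟩, dif_pos ⟨k, hks⟩]
  exact Nat.find_comp_succ _ _ hne

noncomputable def toKTree (R : RankedTree p s V) : KTree α where
  verts := insert s V
  root := s
  root_mem := mem_insert_self s V
  parent := R.par
  depth := R.depth
  parent_mem v hv hvs := R.par_mem v ((mem_insert.1 hv).resolve_left hvs)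
  depth_root := (R.depth_eq_zero_iff (mem_insert_self s V)).2 rfl
  root_of_depth_zero _ hv := (R.depth_eq_zero_iff hv).1
  depth_parent _ hv hvs := R.depth_par ((mem_insert.1 hv).resolve_left hvs)

theorem toKTree_isKHop (R : RankedTree p s V) : R.toKTree.IsKHop p := by
  intro v hv
  refine (R.depth_le_rank hv).trans ?_
  rcases mem_insert.1 hv with rfl | hvV
  · simp [R.rank_root]
  · exact R.rank_le v hvV

theorem cost_toKTree (d : α → α → ℝ) (R : RankedTree p s V) : R.toKTree.cost d = R.cost d := by
  simp only [KTree.cost, toKTree, erase_insert R.root_notMem, cost]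

def ofKTree (T : KTree α) (hroot : T.root = s) (hverts : T.verts = insert s V) (hs : s ∉ V)
    (hT : T.IsKHop p) : RankedTree p s V where
  par := T.parent
  rank := T.depth
  rank_root := hroot ▸ T.depth_root
  par_mem x hx := hverts ▸ T.parent_mem x (hverts ▸ mem_insert_of_mem hx)
    (hroot ▸ ne_of_mem_of_not_mem hx hs)
  rank_par_lt x hx := by
    rw [T.depth_parent x (hverts ▸ mem_insert_of_mem hx) (hroot ▸ ne_of_mem_of_not_mem hx hs)]
    exact Nat.lt_succ_self _
  rank_le x hx := hT x (hverts ▸ mem_insert_of_mem hx)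

theorem ofKTree_isGraded (T : KTree α) (hroot : T.root = s) (hverts : T.verts = insert s V)
    (hs : s ∉ V) (hT : T.IsKHop p) : (ofKTree T hroot hverts hs hT).IsGraded := fun x hx =>
  (T.depth_parent x (hverts ▸ mem_insert_of_mem hx) (hroot ▸ ne_of_mem_of_not_mem hx hs)).symm

theorem _root_.KTree.cost_eq_sum (d : α → α → ℝ) {T : KTree α} (hroot : T.root = s)
    (hverts : T.verts = insert s V) (hs : s ∉ V) :
    T.cost d = ∑ x ∈ V, d x (T.parent x) := by
  rw [KTree.cost, hroot, hverts, erase_insert hs]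

theorem cost_ofKTree (d : α → α → ℝ) (T : KTree α) (hroot : T.root = s)
    (hverts : T.verts = insert s V) (hs : s ∉ V) (hT : T.IsKHop p) :
    (ofKTree T hroot hverts hs hT).cost d = T.cost d :=
  (KTree.cost_eq_sum d hroot hverts hs).symm

def star (hs : s ∉ V) (hp : 1 ≤ p) : RankedTree p s V where
  par _ := s
  rank x := if x ∈ V then 1 else 0
  rank_root := if_neg hs
  par_mem _ _ := mem_insert_self s V
  rank_par_lt x hx := by simp [hx, hs]
  rank_le x hx := by simp [hx, hp]

def empty (p : ℕ) (s : α) : RankedTree p s ∅ where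
  par := id
  rank _ := 0
  rank_root := rfl
  par_mem _ h := absurd h (notMem_empty _)
  rank_par_lt _ h := absurd h (notMem_empty _)
  rank_le _ h := absurd h (notMem_empty _)

def join {V₁ V₂ : Finset α} (R₁ : RankedTree p s V₁) (R₂ : RankedTree p s V₂)
    (h : Disjoint V₁ V₂) : RankedTree p s (V₁ ∪ V₂) where
  par x := if x ∈ V₁ then R₁.par x else R₂.par x
  rank x := if x ∈ V₁ then R₁.rank x else R₂.rank x
  rank_root := by simp [R₁.root_notMem, R₂.rank_root]
  par_mem x hx := by
    by_cases hx₁ : x ∈ V₁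
    · have := R₁.par_mem x hx₁
      simp only [if_pos hx₁, mem_insert, mem_union] at this ⊢
      tauto
    · have := R₂.par_mem x ((mem_union.1 hx).resolve_left hx₁)
      simp only [if_neg hx₁, mem_insert, mem_union] at this ⊢
      tauto
  rank_par_lt x hx := by
    by_cases hx₁ : x ∈ V₁
    · simp only [if_pos hx₁]
      rcases mem_insert.1 (R₁.par_mem x hx₁) with h₁ | h₁
      · simpa [h₁, R₁.root_notMem, R₂.rank_root, ← R₁.rank_root] using R₁.rank_par_lt x hx₁
      · simpa [h₁] using R₁.rank_par_lt x hx₁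
    · have hx₂ := (mem_union.1 hx).resolve_left hx₁
      simp only [if_neg hx₁]
      rcases mem_insert.1 (R₂.par_mem x hx₂) with h₂ | h₂
      · simpa [h₂, R₁.root_notMem] using R₂.rank_par_lt x hx₂
      · simpa [disjoint_right.1 h h₂] using R₂.rank_par_lt x hx₂
  rank_le x hx := by
    by_cases hx₁ : x ∈ V₁
    · simpa [hx₁] using R₁.rank_le x hx₁
    · simpa [hx₁] using R₂.rank_le x ((mem_union.1 hx).resolve_left hx₁)

theorem cost_join (d : α → α → ℝ) {V₁ V₂ : Finset α} (R₁ : RankedTree p s V₁)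
    (R₂ : RankedTree p s V₂) (h : Disjoint V₁ V₂) :
    (R₁.join R₂ h).cost d = R₁.cost d + R₂.cost d := by
  rw [cost, sum_union h]
  congr 1
  · exact sum_congr rfl fun x hx => by simp [join, hx]
  · exact sum_congr rfl fun x hx => by simp [join, disjoint_right.1 h hx]

def graft {s' : α} {W : Finset α} (R : RankedTree p s' W) (hs : s ∉ insert s' W) :
    RankedTree (p + 1) s (insert s' W) where
  par x := if x = s' then s else R.par x
  rank x := if x ∈ insert s' W then R.rank x + 1 else 0
  rank_root := if_neg hs
  par_mem x hx := by
    split_ifs with h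
    · exact mem_insert_self _ _
    · exact mem_insert_of_mem (R.par_mem x ((mem_insert.1 hx).resolve_left h))
  rank_par_lt x hx := by
    by_cases h : x = s'
    · simp [h, hs]
    · have hxW := (mem_insert.1 hx).resolve_left h
      simpa [h, hx, R.par_mem x hxW] using R.rank_par_lt x hxW
  rank_le x hx := by
    rcases mem_insert.1 hx with rfl | hxW
    · simp [R.rank_root]
    · simpa [hx] using R.rank_le x hxW

theorem cost_graft (d : α → α → ℝ) {s' : α} {W : Finset α} (R : RankedTree p s' W)
    (hs : s ∉ insert s' W) : (R.graft hs).cost d = d s' s + R.cost d := by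
  rw [cost, sum_insert R.root_notMem]
  congr 1
  · simp [graft]
  · exact sum_congr rfl fun x hx => by simp [graft, ne_of_mem_of_not_mem hx R.root_notMem]

def restrict (R : RankedTree p s V) {r : α} {W : Finset α} {q : ℕ} (hWV : W ⊆ V)
    (hpar : ∀ x ∈ W, R.par x ∈ insert r W) (hlt : ∀ x ∈ W, R.rank r < R.rank x)
    (hle : ∀ x ∈ W, R.rank x ≤ q + R.rank r) : RankedTree q r W where
  par := R.par
  rank x := R.rank x - R.rank r
  rank_root := Nat.sub_self _
  par_mem := hpar
  rank_par_lt x hx := by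
    have := R.rank_par_lt x (hWV hx)
    have := hlt x hx
    rcases mem_insert.1 (hpar x hx) with h | h
    · rw [h]
      omega
    · have := hlt _ h
      omega
  rank_le x hx := by
    have := hle x hx
    omega

end RankedTree

section MinTreeCost

variable {α : Type} [DecidableEq α] {p : ℕ} {s : α} {V : Finset α}

def treeCosts (d : α → α → ℝ) (p : ℕ) (s : α) (V : Finset α) : Set ℝ :=
  {c | ∃ T : KTree α, T.root = s ∧ T.verts = insert s V ∧ T.IsKHop p ∧ T.cost d = c}

noncomputable def minTreeCost (d : α → α → ℝ) (p : ℕ) (s : α) (V : Finset α) : ℝ :=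
  sInf (treeCosts d p s V)

theorem lineA_eq_minTreeCost (f : ℤ → ℝ) (p : ℕ) (s a b : ℤ) :
    lineA f p s a b = minTreeCost (fun i j => |f i - f j|) p s (Icc a b) :=
  rfl

theorem treeCosts_finite (d : α → α → ℝ) (hs : s ∉ V) : (treeCosts d p s V).Finite := by
  refine (Set.finite_range fun g : V → (insert s V : Finset α) => ∑ x : V, d x (g x)).subset ?_
  rintro _ ⟨T, hroot, hverts, -, rfl⟩
  refine ⟨fun x => ⟨T.parent x, ?_⟩, ?_⟩
  · rw [← hverts]
    exact T.parent_mem x (hverts ▸ mem_insert_of_mem x.2) (hroot ▸ ne_of_mem_of_not_mem x.2 hs)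
  · rw [KTree.cost_eq_sum d hroot hverts hs, ← sum_coe_sort V]

theorem minTreeCost_le_cost (d : α → α → ℝ) (R : RankedTree p s V) :
    minTreeCost d p s V ≤ R.cost d :=
  csInf_le (treeCosts_finite d R.root_notMem).bddBelow
    ⟨R.toKTree, rfl, rfl, R.toKTree_isKHop, R.cost_toKTree d⟩

theorem exists_isGraded_cost_eq_minTreeCost (d : α → α → ℝ) (hs : s ∉ V) (hp : 1 ≤ p) :
    ∃ R : RankedTree p s V, R.IsGraded ∧ R.cost d = minTreeCost d p s V := by
  let S := RankedTree.star hs hp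
  have hne : (treeCosts d p s V).Nonempty := ⟨_, S.toKTree, rfl, rfl, S.toKTree_isKHop, rfl⟩
  obtain ⟨T, hroot, hverts, hT, hcost⟩ := hne.csInf_mem (treeCosts_finite d hs)
  exact ⟨_, RankedTree.ofKTree_isGraded T hroot hverts hs hT,
    (RankedTree.cost_ofKTree d T hroot hverts hs hT).trans hcost⟩

theorem RankedTree.isOptimal_of_cost_eq {d : α → α → ℝ} {R : RankedTree p s V}
    (h : R.cost d = minTreeCost d p s V) : R.IsOptimal d :=
  fun R' => h ▸ minTreeCost_le_cost d R'

theorem minTreeCost_nonneg {d : α → α → ℝ} (hd : ∀ x y, 0 ≤ d x y) :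
    0 ≤ minTreeCost d p s V :=
  Real.sInf_nonneg <| by
    rintro _ ⟨T, -, -, -, rfl⟩
    exact sum_nonneg fun _ _ => hd _ _

theorem minTreeCost_empty (d : α → α → ℝ) : minTreeCost d p s ∅ = 0 :=
  le_antisymm ((minTreeCost_le_cost d (RankedTree.empty p s)).trans_eq sum_empty)
    (Real.sInf_nonneg <| by
      rintro _ ⟨T, hroot, hverts, -, rfl⟩
      rw [KTree.cost_eq_sum d hroot hverts (notMem_empty s), sum_empty])

theorem minTreeCost_one (d : α → α → ℝ) (hs : s ∉ V) :
    minTreeCost d 1 s V = ∑ x ∈ V, d x s := by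
  obtain ⟨R, -, hR⟩ := exists_isGraded_cost_eq_minTreeCost d hs le_rfl
  rw [← hR]
  exact sum_congr rfl fun x hx => by rw [R.par_eq_root_of_le_one le_rfl hx]

end MinTreeCost

/-! ### Optimal trees on a line -/

namespace RankedTree.IsOptimal

variable {α : Type} [LinearOrder α] {p : ℕ} {s : α} {V : Finset α} {f : α → ℝ}
  {R : RankedTree p s V}

theorem par_same_side (hf : StrictMono f) (hR : R.IsOptimal fun i j => |f i - f j|) {w q : α}
    (hw : w ∈ V) (hq : q ∈ insert s V) (hlt : R.rank q < R.rank w) :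
    (q < w → q ≤ R.par w) ∧ (w < q → R.par w ≤ q) := by
  have h := hR.dist_par_le hw hq hlt
  refine ⟨fun hqw => ?_, fun hwq => ?_⟩ <;> by_contra! hpar
  · have := hf hqw
    have := hf hpar
    rw [abs_of_pos (by linarith), abs_of_pos (by linarith)] at h
    linarith
  · have := hf hwq
    have := hf hpar
    rw [abs_of_neg (by linarith), abs_of_neg (by linarith)] at h
    linarith

theorem par_le_par (hf : StrictMono f) (hR : R.IsOptimal fun i j => |f i - f j|) {w u : α}
    (hw : w ∈ V) (hu : u ∈ V) (hwu : w < u) (hrank : R.rank w = R.rank u) :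
    R.par w ≤ R.par u := by
  by_contra! hlt
  have hu_lt := R.rank_par_lt u hu
  have hw_lt := R.rank_par_lt w hw
  -- the two edges would cross as `par u < w < u < par w`
  have h₁ : R.par u < w := by
    by_contra! h
    have hne : R.par u ≠ w := fun h => by rw [h] at hu_lt; omega
    exact (hR.par_same_side hf hw (R.par_mem u hu) (by omega)).2 (h.lt_of_ne' hne) |>.not_gt hlt
  have h₂ : u < R.par w := by
    by_contra! h
    have hne : R.par w ≠ u := fun h => by rw [h] at hw_lt; omega
    exact (hR.par_same_side hf hu (R.par_mem w hw) (by omega)).1 (h.lt_of_ne hne) |>.not_gt hlt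
  have key := hR.dist_par_add_dist_par_le hw hu hwu.ne hrank
  have := hf h₁
  have := hf hwu
  have := hf h₂
  rw [abs_of_neg (by linarith), abs_of_pos (by linarith), abs_of_pos (by linarith),
    abs_of_neg (by linarith)] at key
  linarith

theorem top_mono (hf : StrictMono f) (hR : R.IsOptimal fun i j => |f i - f j|)
    (hgr : R.IsGraded) {x y : α} (hx : x ∈ V) (hy : y ∈ V) (hxy : x ≤ y) :
    R.top x ≤ R.top y := by
  induction hn : R.rank x + R.rank y using Nat.strong_induction_on generalizing x y with
  | _ n ih =>
    rcases hxy.eq_or_lt with rfl | hxy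
    · rfl
    have hx_lt := R.rank_par_lt x hx
    have hy_lt := R.rank_par_lt y hy
    rcases lt_trichotomy (R.rank x) (R.rank y) with hrank | hrank | hrank
    · have hy₁ : R.par y ≠ s := fun h => by
        have := (hgr.par_eq_root_iff hy).1 h
        have := R.rank_pos hx
        omega
      rw [← hgr.top_par hy hy₁]
      exact ih _ (by omega) hx (R.par_mem_of_ne hy hy₁)
        ((hR.par_same_side hf hy (mem_insert_of_mem hx) hrank).1 hxy) rfl
    · by_cases hx₁ : R.par x = s
      · have hy₁ : R.par y = s :=
          (hgr.par_eq_root_iff hy).2 (hrank ▸ (hgr.par_eq_root_iff hx).1 hx₁)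
        rw [hgr.top_eq_self hx hx₁, hgr.top_eq_self hy hy₁]
        exact hxy.le
      · have hy₁ : R.par y ≠ s := fun h =>
          hx₁ ((hgr.par_eq_root_iff hx).2 (hrank ▸ (hgr.par_eq_root_iff hy).1 h))
        rw [← hgr.top_par hx hx₁, ← hgr.top_par hy hy₁]
        exact ih _ (by omega) (R.par_mem_of_ne hx hx₁) (R.par_mem_of_ne hy hy₁)
          (hR.par_le_par hf hx hy hxy hrank) rfl
    · have hx₁ : R.par x ≠ s := fun h => by
        have := (hgr.par_eq_root_iff hx).1 h
        have := R.rank_pos hy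
        omega
      rw [← hgr.top_par hx hx₁]
      exact ih _ (by omega) (R.par_mem_of_ne hx hx₁) hy
        ((hR.par_same_side hf hx (mem_insert_of_mem hy) hrank).2 hxy) rfl

theorem exists_suffix_top_eq (hf : StrictMono f) (hR : R.IsOptimal fun i j => |f i - f j|)
    (hgr : R.IsGraded) (hV : V.Nonempty) :
    ∃ s' ∈ V, R.par s' = s ∧ ∃ c' ∈ V, c' ≤ s' ∧ ∀ x ∈ V, (R.top x = s' ↔ c' ≤ x) := by
  obtain ⟨x₀, hx₀⟩ := hV
  let C := V.filter fun x => R.par x = s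
  have hC : C.Nonempty := ⟨R.top x₀, mem_filter.2 (hgr.top_mem_and_par_top hx₀)⟩
  obtain ⟨hs'V, hs'⟩ := mem_filter.1 (C.max'_mem hC)
  have htop_le : ∀ x ∈ V, R.top x ≤ C.max' hC :=
    fun x hx => C.le_max' _ (mem_filter.2 (hgr.top_mem_and_par_top hx))
  let B := V.filter fun x => R.top x = C.max' hC
  have hB : C.max' hC ∈ B := mem_filter.2 ⟨hs'V, hgr.top_eq_self hs'V hs'⟩
  obtain ⟨hc'V, hc'⟩ := mem_filter.1 (B.min'_mem ⟨_, hB⟩)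
  refine ⟨_, hs'V, hs', _, hc'V, B.min'_le _ hB, fun x hx =>
    ⟨fun h => B.min'_le _ (mem_filter.2 ⟨hx, h⟩), fun h => ?_⟩⟩
  exact le_antisymm (htop_le x hx) (hc' ▸ hR.top_mono hf hgr hc'V hx h)

theorem par_of_top_eq (hf : StrictMono f) (hR : R.IsOptimal fun i j => |f i - f j|)
    (hgr : R.IsGraded) {s' x : α} (hs' : s' ∈ V) (hpar : R.par s' = s) (hx : x ∈ V)
    (htop : R.top x = s') (hxs : x ≠ s') :
    1 < R.rank x ∧ R.par x ∈ V ∧ R.top (R.par x) = s' ∧ (s' < x → s' ≤ R.par x) ∧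
      (x < s' → R.par x ≤ s') := by
  have hx₁ : R.par x ≠ s := fun h => hxs ((hgr.top_eq_self hx h).symm.trans htop)
  have hr : 1 < R.rank x := by
    have := (hgr.par_eq_root_iff hx).not.1 hx₁
    have := R.rank_pos hx
    omega
  have hrank' : R.rank s' < R.rank x := by rw [(hgr.par_eq_root_iff hs').1 hpar]; exact hr
  exact ⟨hr, R.par_mem_of_ne hx hx₁, (hgr.top_par hx hx₁).trans htop,
    hR.par_same_side hf hx (mem_insert_of_mem hs') hrank'⟩

end RankedTree.IsOptimal

/-! ### The recursion on an interval of `ℤ` -/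

section Interval

variable {f : ℤ → ℝ} {p q : ℕ} {s a b s' c' : ℤ}

theorem Icc_split (hs' : s' ∈ Icc a b) (hc' : c' ∈ Icc a s') :
    Icc a b = Icc a (c' - 1) ∪ insert s' (Icc c' (s' - 1) ∪ Icc (s' + 1) b) ∧
      Disjoint (Icc a (c' - 1)) (insert s' (Icc c' (s' - 1) ∪ Icc (s' + 1) b)) ∧
      Disjoint (Icc c' (s' - 1)) (Icc (s' + 1) b) := by
  simp only [mem_Icc] at hs' hc'
  refine ⟨?_, disjoint_left.2 fun x h₁ h₂ => ?_, disjoint_left.2 fun x h₁ h₂ => ?_⟩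
  · ext x
    simp only [mem_Icc, mem_union, mem_insert]
    omega
  all_goals simp only [mem_Icc, mem_union, mem_insert] at h₁ h₂; omega

theorem RankedTree.IsOptimal.par_mem_blocks (hf : StrictMono f)
    {R : RankedTree p s (Icc a b)} (hR : R.IsOptimal fun i j => |f i - f j|) (hgr : R.IsGraded)
    (hs' : s' ∈ Icc a b) (hc' : c' ∈ Icc a s') (hpar : R.par s' = s)
    (hblock : ∀ x ∈ Icc a b, R.top x = s' ↔ c' ≤ x) :
    (∀ x ∈ Icc a (c' - 1), R.par x ∈ insert s (Icc a (c' - 1))) ∧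
      (∀ x ∈ Icc c' (s' - 1), R.par x ∈ insert s' (Icc c' (s' - 1))) ∧
      (∀ x ∈ Icc (s' + 1) b, R.par x ∈ insert s' (Icc (s' + 1) b)) := by
  have hbelow : ∀ x ∈ Icc a b, c' ≤ x → x ≠ s' → R.par x ∈ Icc a b ∧ c' ≤ R.par x ∧
      (s' < x → s' ≤ R.par x) ∧ (x < s' → R.par x ≤ s') := by
    intro x hx hcx hxs
    obtain ⟨-, hpx, htop, hside⟩ := hR.par_of_top_eq hf hgr hs' hpar hx ((hblock x hx).2 hcx) hxs
    exact ⟨hpx, (hblock _ hpx).1 htop, hside⟩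
  simp only [mem_Icc] at hs' hc'
  refine ⟨fun x hx => ?_, fun x hx => ?_, fun x hx => ?_⟩ <;> simp only [mem_Icc] at hx
  · have hxI : x ∈ Icc a b := mem_Icc.2 ⟨hx.1, by omega⟩
    by_cases hx₁ : R.par x = s
    · rw [hx₁]
      exact mem_insert_self _ _
    have hpx := R.par_mem_of_ne hxI hx₁
    have : ¬ c' ≤ R.par x := by
      rw [← hblock _ hpx, hgr.top_par hxI hx₁, hblock x hxI]
      omega
    simp only [mem_insert, mem_Icc] at hpx ⊢
    omega
  · obtain ⟨hpx, hc, -, hle⟩ := hbelow x (mem_Icc.2 ⟨by omega, by omega⟩) hx.1 (by omega)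
    simp only [mem_insert, mem_Icc] at hpx ⊢
    omega
  · obtain ⟨hpx, -, hge, -⟩ := hbelow x (mem_Icc.2 ⟨by omega, hx.2⟩) (by omega) (by omega)
    simp only [mem_insert, mem_Icc] at hpx ⊢
    omega

theorem RankedTree.IsOptimal.exists_split (hf : StrictMono f)
    {R : RankedTree (q + 1) s (Icc a b)} (hR : R.IsOptimal fun i j => |f i - f j|)
    (hgr : R.IsGraded) (hab : a ≤ b) :
    ∃ s' ∈ Icc a b, ∃ c' ∈ Icc a s', ∃ (C₁ : RankedTree (q + 1) s (Icc a (c' - 1)))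
      (C₂ : RankedTree q s' (Icc c' (s' - 1))) (C₃ : RankedTree q s' (Icc (s' + 1) b)),
      R.cost (fun i j => |f i - f j|) = |f s' - f s| + C₁.cost (fun i j => |f i - f j|) +
        C₂.cost (fun i j => |f i - f j|) + C₃.cost (fun i j => |f i - f j|) := by
  obtain ⟨s', hs', hpar, c', hc', hcs, hblock⟩ :=
    hR.exists_suffix_top_eq hf hgr ⟨a, left_mem_Icc.2 hab⟩
  have hc'I : c' ∈ Icc a s' := mem_Icc.2 ⟨(mem_Icc.1 hc').1, hcs⟩
  obtain ⟨hpar₁, hpar₂, hpar₃⟩ := hR.par_mem_blocks hf hgr hs' hc'I hpar hblock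
  obtain ⟨hsplit, hd₁, hd₂⟩ := Icc_split hs' hc'I
  have hrank : ∀ x ∈ Icc a b, c' ≤ x → x ≠ s' → R.rank s' < R.rank x := fun x hx hcx hxs => by
    rw [(hgr.par_eq_root_iff hs').1 hpar]
    exact (hR.par_of_top_eq hf hgr hs' hpar hx ((hblock x hx).2 hcx) hxs).1
  simp only [mem_Icc] at hs' hc'
  have hsub₁ : Icc a (c' - 1) ⊆ Icc a b := Icc_subset_Icc le_rfl (by omega)
  have hsub₂ : Icc c' (s' - 1) ⊆ Icc a b := Icc_subset_Icc hc'.1 (by omega)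
  have hsub₃ : Icc (s' + 1) b ⊆ Icc a b := Icc_subset_Icc (by omega) le_rfl
  have hle : ∀ x ∈ Icc a b, R.rank x ≤ q + R.rank s' := fun x hx => by
    rw [(hgr.par_eq_root_iff (mem_Icc.2 hs')).1 hpar]
    exact R.rank_le x hx
  refine ⟨s', mem_Icc.2 hs', c', hc'I,
    R.restrict hsub₁ hpar₁ (fun x hx => by rw [R.rank_root]; exact R.rank_pos (hsub₁ hx))
      (fun x hx => by rw [R.rank_root]; exact R.rank_le x (hsub₁ hx)),
    R.restrict hsub₂ hpar₂
      (fun x hx => hrank x (hsub₂ hx) (mem_Icc.1 hx).1 (by simp only [mem_Icc] at hx; omega))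
      (fun x hx => hle x (hsub₂ hx)),
    R.restrict hsub₃ hpar₃
      (fun x hx => hrank x (hsub₃ hx) (by simp only [mem_Icc] at hx; omega)
        (by simp only [mem_Icc] at hx; omega))
      (fun x hx => hle x (hsub₃ hx)), ?_⟩
  rw [cost, sum_congr hsplit fun _ _ => rfl, sum_union hd₁, sum_insert (by simp), sum_union hd₂,
    hpar]
  simp only [cost, restrict]
  ring

theorem lineA_le_split (hq : 1 ≤ q) (hs : s ∉ Icc a b) (hs' : s' ∈ Icc a b)
    (hc' : c' ∈ Icc a s') :
    lineA f (q + 1) s a b ≤ |f s' - f s| + lineA f (q + 1) s a (c' - 1) +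
      lineA f q s' c' (s' - 1) + lineA f q s' (s' + 1) b := by
  obtain ⟨hsplit, hd₁, hd₂⟩ := Icc_split hs' hc'
  have hs₁ : s ∉ Icc a (c' - 1) := fun h => hs (hsplit ▸ mem_union_left _ h)
  have hs₂₃ : s ∉ insert s' (Icc c' (s' - 1) ∪ Icc (s' + 1) b) :=
    fun h => hs (hsplit ▸ mem_union_right _ h)
  obtain ⟨C₁, -, h₁⟩ := exists_isGraded_cost_eq_minTreeCost _ hs₁ (Nat.le_add_left 1 q)
  have hs₂ : s' ∉ Icc c' (s' - 1) := by simp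
  have hs₃ : s' ∉ Icc (s' + 1) b := by simp
  obtain ⟨C₂, -, h₂⟩ := exists_isGraded_cost_eq_minTreeCost _ hs₂ hq
  obtain ⟨C₃, -, h₃⟩ := exists_isGraded_cost_eq_minTreeCost _ hs₃ hq
  simp only [lineA_eq_minTreeCost]
  calc minTreeCost _ (q + 1) s (Icc a b)
      ≤ (C₁.join ((C₂.join C₃ hd₂).graft hs₂₃) hd₁).cost fun i j => |f i - f j| := by
        rw [hsplit]
        exact minTreeCost_le_cost _ _
    _ = _ := by
        rw [RankedTree.cost_join, RankedTree.cost_graft, RankedTree.cost_join, h₁, h₂, h₃]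
        ring

theorem exists_split_le_lineA (hf : StrictMono f) (hs : s ∉ Icc a b) (hab : a ≤ b) :
    ∃ s' ∈ Icc a b, ∃ c' ∈ Icc a s', |f s' - f s| + lineA f (q + 1) s a (c' - 1) +
      lineA f q s' c' (s' - 1) + lineA f q s' (s' + 1) b ≤ lineA f (q + 1) s a b := by
  obtain ⟨R, hgr, hR⟩ := exists_isGraded_cost_eq_minTreeCost _ hs (Nat.le_add_left 1 q)
  obtain ⟨s', hs', c', hc', C₁, C₂, C₃, hcost⟩ :=
    (RankedTree.isOptimal_of_cost_eq hR).exists_split hf hgr hab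
  refine ⟨s', hs', c', hc', ?_⟩
  simp only [lineA_eq_minTreeCost]
  rw [← hR, hcost]
  gcongr <;> exact minTreeCost_le_cost _ _

theorem lineA_nonneg : 0 ≤ lineA f p s a b :=
  minTreeCost_nonneg fun _ _ => abs_nonneg _

end Interval

/-- base cases and the recurrence of the line DP:
A[p,s,a,b] = 0 for a > b; A[1,s,a,b] = Σ_{x ∈ [a,b]} d(v_s, v_x); and for
p > 1, a ≤ b,
A[p,s,a,b] = min_{s' ∈ [a,b], c ∈ [a,s']}
  ( d(v_{s'}, v_s) + A[p,s,a,c-1] + A[p-1,s',c,s'-1] + A[p-1,s',s'+1,b] ). -/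
theorem stmt13 (f : ℤ → ℝ) (hf : StrictMono f) (s a b : ℤ)
    (hs : s ∉ Finset.Icc a b) :
    (b < a → ∀ p : ℕ, lineA f p s a b = 0) ∧
    (lineA f 1 s a b = ∑ x ∈ Finset.Icc a b, |f s - f x|) ∧
    (∀ p : ℕ, 1 < p → a ≤ b →
      lineA f p s a b =
        sInf {c : ℝ | ∃ s' ∈ Finset.Icc a b, ∃ c' ∈ Finset.Icc a s',
          c = |f s' - f s| + lineA f p s a (c' - 1) +
              lineA f (p - 1) s' c' (s' - 1) + lineA f (p - 1) s' (s' + 1) b}) := by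
  refine ⟨fun hba p => ?_, ?_, fun p hp hab => ?_⟩
  · rw [lineA_eq_minTreeCost, Icc_eq_empty_of_lt hba, minTreeCost_empty]
  · rw [lineA_eq_minTreeCost, minTreeCost_one _ hs]
    exact sum_congr rfl fun x _ => abs_sub_comm _ _
  obtain ⟨q, rfl⟩ : ∃ q, p = q + 1 := ⟨p - 1, by omega⟩
  rw [Nat.add_sub_cancel]
  apply le_antisymm
  · refine le_csInf ⟨_, a, left_mem_Icc.2 hab, a, left_mem_Icc.2 le_rfl, rfl⟩ ?_
    rintro _ ⟨s', hs', c', hc', rfl⟩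
    exact lineA_le_split (by omega) hs hs' hc'
  · obtain ⟨s', hs', c', hc', hle⟩ := exists_split_le_lineA (q := q) hf hs hab
    refine le_trans (csInf_le ⟨0, ?_⟩ ⟨s', hs', c', hc', rfl⟩) hle
    rintro _ ⟨t, -, u, -, rfl⟩
    exact add_nonneg (add_nonneg (add_nonneg (abs_nonneg _) lineA_nonneg) lineA_nonneg)
      lineA_nonneg
end
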